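/- If A is a K×K real symmetric doubly-stochastic primitive matrix, γ > 0, and λ = max{|1 - K/γ|, ρ₂} where ρ₂ is the second largest eigenvalue modulus of A, then for every column k, Σ_{ℓ=1}^K |1 - γ A_{ℓk}| ≤ γ √K λ. -/

import Mathlib

/-!
The vector `(1 - γ A_{ℓk})_ℓ` is `γ` times the `k`-th column of `γ⁻¹ 𝟙 𝟙ᵀ - A`. Split
`e_k = K⁻¹ 𝟙 + q` with `q ⊥ 𝟙`. Since `A 𝟙 = 𝟙` and `A` is symmetric, `A` preserves `𝟙ᗮ`, and on
`𝟙ᗮ` its eigenvalues are bounded by `ρ₂`, so `‖A q‖ ≤ ρ₂ ‖q‖`. Hence the column equals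
`(K/γ - 1) K⁻¹ 𝟙 - A q`, a sum of orthogonal vectors, and Pythagoras bounds its Euclidean norm by
`λ ‖e_k‖ = λ`. Cauchy–Schwarz turns this into the `ℓ¹` bound, at the cost of the factor `√K`.
-/

open Finset Matrix

namespace LinearMap.IsSymmetric

variable {𝕜 E : Type*} [RCLike 𝕜] [NormedAddCommGroup E] [InnerProductSpace 𝕜 E]
  {T : E →ₗ[𝕜] E}

theorem norm_apply_le_of_eigenvalue_le [FiniteDimensional 𝕜 E] (hT : T.IsSymmetric) {r : ℝ}
    (hr : 0 ≤ r) (h : ∀ (μ : 𝕜) (v : E), v ≠ 0 → T v = μ • v → ‖μ‖ ≤ r) (x : E) :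
    ‖T x‖ ≤ r * ‖x‖ := by
  set b := hT.eigenvectorBasis rfl
  have hsq : ‖T x‖ ^ 2 ≤ (r * ‖x‖) ^ 2 := by
    rw [← b.repr.norm_map, ← b.repr.norm_map x, EuclideanSpace.norm_sq_eq, mul_pow,
      EuclideanSpace.norm_sq_eq, Finset.mul_sum]
    gcongr with i
    rw [hT.eigenvectorBasis_apply_self_apply, norm_mul, mul_pow]
    gcongr
    exact h _ _ (b.orthonormal.ne_zero i) (hT.apply_eigenvectorBasis rfl i)
  exact (pow_le_pow_iff_left₀ (norm_nonneg _) (by positivity) two_ne_zero).mp hsq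

theorem norm_apply_le_of_mem_invariant [FiniteDimensional 𝕜 E] (hT : T.IsSymmetric)
    {V : Submodule 𝕜 E} (hV : ∀ v ∈ V, T v ∈ V) {r : ℝ} (hr : 0 ≤ r)
    (h : ∀ (μ : 𝕜) (v : E), v ∈ V → v ≠ 0 → T v = μ • v → ‖μ‖ ≤ r) {x : E} (hx : x ∈ V) :
    ‖T x‖ ≤ r * ‖x‖ :=
  (hT.restrict_invariant hV).norm_apply_le_of_eigenvalue_le hr
    (fun μ v hv hTv => h μ v v.2 (by simpa using hv) (congrArg Subtype.val hTv)) ⟨x, hx⟩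

theorem apply_mem_orthogonal_singleton (hT : T.IsSymmetric) {u : E} {c : 𝕜} (hu : T u = c • u)
    {v : E} (hv : v ∈ (𝕜 ∙ u)ᗮ) : T v ∈ (𝕜 ∙ u)ᗮ := by
  rw [Submodule.mem_orthogonal_singleton_iff_inner_right] at hv ⊢
  rw [← hT, hu, inner_smul_left, hv, mul_zero]

end LinearMap.IsSymmetric

theorem norm_smul_sub_apply_add_le {𝕜 E : Type*} [RCLike 𝕜] [NormedAddCommGroup E]
    [InnerProductSpace 𝕜 E] {T : E →ₗ[𝕜] E} {V : Submodule 𝕜 E} (hV : ∀ p ∈ V, T p = p)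
    (hVperp : ∀ q ∈ Vᗮ, T q ∈ Vᗮ) {ρ : ℝ} (hρ : ∀ q ∈ Vᗮ, ‖T q‖ ≤ ρ * ‖q‖) (c : 𝕜)
    {p q : E} (hp : p ∈ V) (hq : q ∈ Vᗮ) :
    ‖c • p - T (p + q)‖ ≤ max ‖c - 1‖ ρ * ‖p + q‖ := by
  set L := max ‖c - 1‖ ρ
  have hsplit : c • p - T (p + q) = (c - 1) • p + -T q := by
    rw [map_add, hV p hp, sub_smul, one_smul]; abel
  have hperp : inner 𝕜 ((c - 1) • p) (-T q) = 0 :=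
    Submodule.inner_right_of_mem_orthogonal (V.smul_mem _ hp) (Vᗮ.neg_mem (hVperp q hq))
  have hpq : inner 𝕜 p q = 0 := Submodule.inner_right_of_mem_orthogonal hp hq
  have hTq : ‖T q‖ ≤ L * ‖q‖ :=
    (hρ q hq).trans (mul_le_mul_of_nonneg_right (le_max_right _ _) (norm_nonneg q))
  have hcp : ‖(c - 1) • p‖ ≤ L * ‖p‖ := by
    rw [norm_smul]; exact mul_le_mul_of_nonneg_right (le_max_left _ _) (norm_nonneg p)
  have hsq : ‖c • p - T (p + q)‖ * ‖c • p - T (p + q)‖ ≤ (L * ‖p + q‖) * (L * ‖p + q‖) := by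
    rw [hsplit, norm_add_sq_eq_norm_sq_add_norm_sq_of_inner_eq_zero _ _ hperp, norm_neg,
      mul_mul_mul_comm, norm_add_sq_eq_norm_sq_add_norm_sq_of_inner_eq_zero _ _ hpq, mul_add]
    have hL : 0 ≤ L := (norm_nonneg _).trans (le_max_left _ _)
    nlinarith [mul_self_le_mul_self (norm_nonneg _) hTq, mul_self_le_mul_self (norm_nonneg _) hcp]
  exact (mul_self_le_mul_self_iff (norm_nonneg _) (by positivity)).mpr hsq

theorem EuclideanSpace.sum_norm_le_sqrt_card_mul_norm {𝕜 ι : Type*} [RCLike 𝕜] [Fintype ι]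
    (x : EuclideanSpace 𝕜 ι) : ∑ i, ‖x i‖ ≤ √(Fintype.card ι) * ‖x‖ := by
  simpa [EuclideanSpace.norm_eq, mul_comm] using
    Real.sum_mul_le_sqrt_mul_sqrt univ (fun i => ‖x i‖) (fun _ => 1)

namespace Matrix

variable {ι : Type*} [Fintype ι] [DecidableEq ι] {A : Matrix ι ι ℝ}

open WithLp (toLp)

theorem toEuclideanLin_toLp_one (hrow : ∀ i, ∑ j, A i j = 1) :
    A.toEuclideanLin (toLp 2 1) = toLp 2 1 := by
  ext i
  simp [toLpLin_apply, mulVec, dotProduct, hrow]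

theorem norm_toEuclideanLin_le_of_mem_orthogonal_one (hsymm : A.IsSymm)
    (hrow : ∀ i, ∑ j, A i j = 1) {ρ : ℝ} (hρ : 0 ≤ ρ)
    (hA : ∀ (μ : ℝ) (v : ι → ℝ), v ≠ 0 → A *ᵥ v = μ • v → ∑ i, v i = 0 → |μ| ≤ ρ)
    {x : EuclideanSpace ℝ ι} (hx : x ∈ (ℝ ∙ toLp 2 1)ᗮ) :
    ‖A.toEuclideanLin x‖ ≤ ρ * ‖x‖ := by
  have hT : A.toEuclideanLin.IsSymmetric := isSymmetric_toEuclideanLin_iff.mpr hsymm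
  have hone : A.toEuclideanLin (toLp 2 1) = (1 : ℝ) • toLp 2 1 := by
    rw [toEuclideanLin_toLp_one hrow, one_smul]
  refine hT.norm_apply_le_of_mem_invariant (fun v hv => hT.apply_mem_orthogonal_singleton hone hv)
    hρ (fun μ v hv hv0 hAv => ?_) hx
  rw [Submodule.mem_orthogonal_singleton_iff_inner_right] at hv
  refine hA μ v.ofLp (by simpa using hv0)
    (by simpa [toLpLin_apply] using congrArg WithLp.ofLp hAv) ?_
  simpa [PiLp.inner_apply] using hv

theorem norm_inv_sub_col_le (hsymm : A.IsSymm) (hrow : ∀ i, ∑ j, A i j = 1) {ρ : ℝ}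
    (hρ : 0 ≤ ρ)
    (hA : ∀ (μ : ℝ) (v : ι → ℝ), v ≠ 0 → A *ᵥ v = μ • v → ∑ i, v i = 0 → |μ| ≤ ρ)
    (γ : ℝ) (k : ι) :
    ‖toLp 2 (fun ℓ => γ⁻¹ - A ℓ k)‖ ≤ max |1 - Fintype.card ι / γ| ρ := by
  set n : ℝ := (Fintype.card ι : ℝ)
  have : Nonempty ι := ⟨k⟩
  have hn : n ≠ 0 := Nat.cast_ne_zero.mpr Fintype.card_ne_zero
  set u : EuclideanSpace ℝ ι := toLp 2 1
  have hu : inner ℝ u u = n := by rw [PiLp.inner_apply]; simp [u, n]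
  set p := n⁻¹ • u
  set q := EuclideanSpace.single k (1 : ℝ) - p
  have hp : p ∈ ℝ ∙ u := Submodule.smul_mem _ _ (Submodule.mem_span_singleton_self u)
  have hq : q ∈ (ℝ ∙ u)ᗮ := by
    rw [Submodule.mem_orthogonal_singleton_iff_inner_right, inner_sub_right, inner_smul_right,
      hu, inv_mul_cancel₀ hn, EuclideanSpace.inner_single_right]
    simp [u]
  have hT : A.toEuclideanLin.IsSymmetric := isSymmetric_toEuclideanLin_iff.mpr hsymm
  have hone : A.toEuclideanLin u = (1 : ℝ) • u := by
    rw [toEuclideanLin_toLp_one hrow, one_smul]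
  have key := norm_smul_sub_apply_add_le (T := A.toEuclideanLin) (V := ℝ ∙ u)
    (fun p hp => by
      obtain ⟨a, rfl⟩ := Submodule.mem_span_singleton.mp hp
      rw [map_smul, hone, one_smul])
    (fun q hq => hT.apply_mem_orthogonal_singleton hone hq)
    (fun q hq => norm_toEuclideanLin_le_of_mem_orthogonal_one hsymm hrow hρ hA hq)
    (n / γ) hp hq
  have hpq : p + q = EuclideanSpace.single k 1 := add_sub_cancel p _
  have hcol : (n / γ) • p - A.toEuclideanLin (p + q) = toLp 2 (fun ℓ => γ⁻¹ - A ℓ k) := by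
    ext ℓ
    simp [hpq, p, u, toLpLin_apply, smul_smul, div_mul_eq_mul_div, hn]
  rwa [hcol, hpq, PiLp.norm_single, norm_one, mul_one, Real.norm_eq_abs, abs_sub_comm] at key

end Matrix

theorem stmt10_general (K : ℕ) (A : Matrix (Fin K) (Fin K) ℝ)
    (hsymm : A.IsSymm)
    (hrow : ∀ ℓ, ∑ k, A ℓ k = 1)
    (ρ₂ : ℝ) (hρ₂nn : 0 ≤ ρ₂)
    (hρ₂ : ∀ (μ : ℝ) (v : Fin K → ℝ), v ≠ 0 → A.mulVec v = μ • v →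
      (∑ i, v i = 0) → |μ| ≤ ρ₂)
    (γ : ℝ) (hγ : 0 < γ) :
    ∀ k : Fin K, ∑ ℓ, |1 - γ * A ℓ k| ≤
      γ * Real.sqrt K * max |1 - K / γ| ρ₂ := by
  intro k
  have hl2 := A.norm_inv_sub_col_le hsymm hrow hρ₂nn hρ₂ γ k
  have hl1 := EuclideanSpace.sum_norm_le_sqrt_card_mul_norm (WithLp.toLp 2 fun ℓ => γ⁻¹ - A ℓ k)
  simp only [Fintype.card_fin, Real.norm_eq_abs] at hl1 hl2
  have hscale : ∀ ℓ, 1 - γ * A ℓ k = γ * (γ⁻¹ - A ℓ k) := fun ℓ => by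
    rw [mul_sub, mul_inv_cancel₀ hγ.ne']
  calc ∑ ℓ, |1 - γ * A ℓ k| = γ * ∑ ℓ, |γ⁻¹ - A ℓ k| := by
        simp_rw [hscale, abs_mul, abs_of_pos hγ, ← Finset.mul_sum]
    _ ≤ γ * (Real.sqrt K * max |1 - K / γ| ρ₂) := by
        gcongr
        exact hl1.trans (mul_le_mul_of_nonneg_left hl2 (Real.sqrt_nonneg _))
    _ = γ * Real.sqrt K * max |1 - K / γ| ρ₂ := (mul_assoc _ _ _).symm

/-- For a symmetric doubly-stochastic primitive combination matrix A with second
largest eigenvalue modulus ρ₂, and γ > 0, each column satisfies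
Σ_ℓ |1 - γ A_{ℓk}| ≤ γ √K max{|1 - K/γ|, ρ₂}. -/
theorem stmt10 (K : ℕ) (hK : 0 < K) (A : Matrix (Fin K) (Fin K) ℝ)
    (hsymm : A.IsSymm)
    (hnn : ∀ ℓ k, 0 ≤ A ℓ k)
    (hrow : ∀ ℓ, ∑ k, A ℓ k = 1)
    (hcol : ∀ k, ∑ ℓ, A ℓ k = 1)
    (hprim : ∃ n : ℕ, ∀ ℓ k, 0 < (A ^ n) ℓ k)
    (ρ₂ : ℝ) (hρ₂nn : 0 ≤ ρ₂) (hρ₂lt : ρ₂ < 1)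
    (hρ₂ : ∀ (μ : ℝ) (v : Fin K → ℝ), v ≠ 0 → A.mulVec v = μ • v →
      (∑ i, v i = 0) → |μ| ≤ ρ₂)
    (γ : ℝ) (hγ : 0 < γ) :
    ∀ k : Fin K, ∑ ℓ, |1 - γ * A ℓ k| ≤
      γ * Real.sqrt K * max |1 - K / γ| ρ₂ :=
  stmt10_general K A hsymm hrow ρ₂ hρ₂nn hρ₂ γ hγ
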